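/- Fix 0 < γ < 1, vectors α, μ ∈ ℝ^n with α ≠ 0, β ∈ ℝ, and a symmetric positive definite n×n matrix Σ. Then the supremum, over all probability measures P on ℝ^n with finite second moment, mean μ, and covariance matrix Σ, of CVaR_{1−γ}^P of the affine function x ↦ αᵀx + β, equals β + αᵀμ + τ·√(αᵀΣα), where τ = √((1−γ)/γ). -/

import Mathlib

open MeasureTheory Matrix
open scoped ENNReal NNReal RealInnerProductSpace Matrix.Norms.L2Operator

noncomputable section

def IsCoupling {α β : Type*} [MeasurableSpace α] [MeasurableSpace β]
    (π : Measure (α × β)) (P : Measure α) (Q : Measure β) : Prop :=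
  π.fst = P ∧ π.snd = Q

noncomputable def W2sq {E : Type*} [SubtractionMonoid E] [MeasurableSpace E]
    (c : E → ℝ) (P Q : Measure E) : ℝ≥0∞ :=
  ⨅ π ∈ {π : Measure (E × E) | IsCoupling π P Q},
    ∫⁻ ξ, ENNReal.ofReal ((c (ξ.1 - ξ.2)) ^ 2) ∂π

def FiniteSecondMoment {E : Type*} [NormedAddCommGroup E] [MeasurableSpace E]
    (P : Measure E) : Prop :=
  Integrable (fun x => ‖x‖ ^ 2) P

def ambiguitySet {E : Type*} [NormedAddCommGroup E] [MeasurableSpace E]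
    (c : E → ℝ) (ε : ℝ) (P : Measure E) : Set (Measure E) :=
  {Q | IsProbabilityMeasure Q ∧ FiniteSecondMoment Q ∧ W2sq c Q P ≤ ENNReal.ofReal (ε ^ 2)}

noncomputable def mulVecMap {m d : ℕ} (A : Matrix (Fin m) (Fin d) ℝ) :
    EuclideanSpace ℝ (Fin d) → EuclideanSpace ℝ (Fin m) :=
  fun x => (EuclideanSpace.equiv (Fin m) ℝ).symm (A.mulVec ((EuclideanSpace.equiv (Fin d) ℝ) x))

noncomputable def meanVec {d : ℕ} (P : Measure (EuclideanSpace ℝ (Fin d))) :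
    EuclideanSpace ℝ (Fin d) :=
  ∫ x, x ∂P

noncomputable def covMatrix {d : ℕ} (P : Measure (EuclideanSpace ℝ (Fin d))) :
    Matrix (Fin d) (Fin d) ℝ :=
  Matrix.of fun i j => ∫ x, (x i - meanVec P i) * (x j - meanVec P j) ∂P

open scoped Classical in
noncomputable def psdSqrt {d : ℕ} (M : Matrix (Fin d) (Fin d) ℝ) : Matrix (Fin d) (Fin d) ℝ :=
  if h : M.PosSemidef then
    h.1.eigenvectorUnitary.1 * diagonal ((RCLike.ofReal : ℝ → ℝ) ∘ (√·) ∘ h.1.eigenvalues) *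
      (star h.1.eigenvectorUnitary : Matrix (Fin d) (Fin d) ℝ)
  else 0

noncomputable def gelbrichSq {d : ℕ} (μ1 : EuclideanSpace ℝ (Fin d))
    (S1 : Matrix (Fin d) (Fin d) ℝ) (μ2 : EuclideanSpace ℝ (Fin d))
    (S2 : Matrix (Fin d) (Fin d) ℝ) : ℝ :=
  ‖μ1 - μ2‖ ^ 2 + (S1 + S2 - (2 : ℝ) • psdSqrt (psdSqrt S1 * S2 * psdSqrt S1)).trace

noncomputable def CVaR {E : Type*} [MeasurableSpace E] (γ : ℝ) (P : Measure E) (f : E → ℝ) : ℝ :=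
  ⨅ τ : ℝ, τ + (1 / γ) * ∫ x, max (f x - τ) 0 ∂P


set_option linter.unusedSectionVars false

section Helpers

variable {n : ℕ}

lemma abs_apply_le_norm (x : EuclideanSpace ℝ (Fin n)) (i : Fin n) : |x i| ≤ ‖x‖ := by
  rw [EuclideanSpace.norm_eq x,
    show |x i| = Real.sqrt (|x i|^2) by rw [Real.sqrt_sq_eq_abs, abs_abs]]
  apply Real.sqrt_le_sqrt
  rw [sq_abs]
  exact Finset.single_le_sum (f := fun j => ‖x j‖^2) (fun j _ => by positivity)
    (Finset.mem_univ i) |>.trans_eq' (by rw [Real.norm_eq_abs, sq_abs])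

variable {P : Measure (EuclideanSpace ℝ (Fin n))} [IsProbabilityMeasure P]
  (h2 : FiniteSecondMoment P)

lemma meas_apply (i : Fin n) : Measurable (fun x : EuclideanSpace ℝ (Fin n) => x i) :=
  (EuclideanSpace.proj (𝕜 := ℝ) i).continuous.measurable

include h2 in
lemma int_one_add_sq : Integrable (fun x : EuclideanSpace ℝ (Fin n) => 1 + ‖x‖^2) P :=
  (integrable_const 1).add h2

include h2 in
lemma int_norm : Integrable (fun x : EuclideanSpace ℝ (Fin n) => ‖x‖) P := by
  refine (int_one_add_sq h2).mono' ?_ ?_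
  · exact (continuous_norm).aestronglyMeasurable
  · filter_upwards with x
    rw [norm_norm]
    nlinarith [norm_nonneg x, sq_nonneg (‖x‖ - 1)]

include h2 in
lemma int_id : Integrable (fun x : EuclideanSpace ℝ (Fin n) => x) P := by
  refine (int_norm h2).mono' ?_ ?_
  · exact aestronglyMeasurable_id
  · filter_upwards with x; exact le_rfl

include h2 in
lemma int_apply (i : Fin n) : Integrable (fun x : EuclideanSpace ℝ (Fin n) => x i) P := by
  refine (int_norm h2).mono' ((meas_apply i).aestronglyMeasurable) ?_
  filter_upwards with x
  rw [Real.norm_eq_abs]; exact abs_apply_le_norm x i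

include h2 in
lemma int_sq_shift (i : Fin n) (c : ℝ) :
    Integrable (fun x : EuclideanSpace ℝ (Fin n) => (x i - c)^2) P := by
  refine (((h2.const_mul 2).add (integrable_const (2*c^2)))).mono'
    (((meas_apply i).sub measurable_const).pow_const 2).aestronglyMeasurable ?_
  filter_upwards with x
  simp only [Pi.add_apply]
  rw [Real.norm_eq_abs, abs_of_nonneg (sq_nonneg _)]
  have h := abs_apply_le_norm x i
  have hx : (x i)^2 ≤ ‖x‖^2 := by nlinarith [sq_abs (x i), abs_nonneg (x i)]
  nlinarith [sq_nonneg (x i + c), sq_nonneg (x i - c)]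

include h2 in
lemma int_prod_shift (i j : Fin n) (c d : ℝ) :
    Integrable (fun x : EuclideanSpace ℝ (Fin n) => (x i - c) * (x j - d)) P := by
  refine ((int_sq_shift h2 i c).add (int_sq_shift h2 j d)).mono'
    (((meas_apply i).sub measurable_const).mul
      ((meas_apply j).sub measurable_const)).aestronglyMeasurable ?_
  filter_upwards with x
  simp only [Pi.add_apply]
  rw [Real.norm_eq_abs, abs_mul]
  nlinarith [sq_nonneg (|x i - c| - |x j - d|), sq_abs (x i - c), sq_abs (x j - d),
    abs_nonneg (x i - c), abs_nonneg (x j - d)]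

include h2 in
lemma int_lin (α : EuclideanSpace ℝ (Fin n)) (b : ℝ) :
    Integrable (fun x : EuclideanSpace ℝ (Fin n) => (∑ i, α i * x i) + b) P := by
  refine Integrable.add ?_ (integrable_const b)
  exact integrable_finset_sum _ (fun i _ => (int_apply h2 i).const_mul (α i))

include h2 in
lemma int_lin_sq (α : EuclideanSpace ℝ (Fin n)) (c : EuclideanSpace ℝ (Fin n)) (u : ℝ) :
    Integrable (fun x : EuclideanSpace ℝ (Fin n) =>
      ((∑ i, α i * (x i - c i)) + u)^2) P := by
  have hrw : (fun x : EuclideanSpace ℝ (Fin n) => ((∑ i, α i * (x i - c i)) + u)^2)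
      = fun x => (∑ i, ∑ j, (α i * α j) * ((x i - c i) * (x j - c j)))
        + ((∑ i, (2*u*α i) * (x i - c i)) + u^2) := by
    funext x
    rw [add_sq]
    have ha : (∑ i, α i * (x i - c i))^2
        = ∑ i, ∑ j, (α i * α j) * ((x i - c i) * (x j - c j)) := by
      rw [pow_two, Finset.sum_mul_sum]
      exact Finset.sum_congr rfl fun i _ => Finset.sum_congr rfl fun j _ => by ring
    have hb : 2 * (∑ i, α i * (x i - c i)) * u
        = ∑ i, (2*u*α i) * (x i - c i) := by
      rw [mul_comm (2:ℝ), mul_assoc, Finset.sum_mul]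
      exact Finset.sum_congr rfl fun i _ => by ring
    rw [ha, hb, add_assoc]
  rw [hrw]
  refine Integrable.add ?_ (Integrable.add ?_ (integrable_const _))
  · exact integrable_finset_sum _ (fun i _ => integrable_finset_sum _
      (fun j _ => (int_prod_shift h2 i j (c i) (c j)).const_mul _))
  · exact integrable_finset_sum _ (fun i _ => ((int_apply h2 i).sub
      (integrable_const (c i))).const_mul _)


lemma expand_sq (α c : EuclideanSpace ℝ (Fin n)) (u : ℝ) (x : EuclideanSpace ℝ (Fin n)) :
    ((∑ i, α i * (x i - c i)) + u)^2
      = (∑ i, ∑ j, (α i * α j) * ((x i - c i) * (x j - c j)))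
        + ((∑ i, (2*u*α i) * (x i - c i)) + u^2) := by
  rw [add_sq]
  have ha : (∑ i, α i * (x i - c i))^2
      = ∑ i, ∑ j, (α i * α j) * ((x i - c i) * (x j - c j)) := by
    rw [pow_two, Finset.sum_mul_sum]
    exact Finset.sum_congr rfl fun i _ => Finset.sum_congr rfl fun j _ => by ring
  have hb : 2 * (∑ i, α i * (x i - c i)) * u
      = ∑ i, (2*u*α i) * (x i - c i) := by
    rw [mul_comm (2:ℝ), mul_assoc, Finset.sum_mul]
    exact Finset.sum_congr rfl fun i _ => by ring
  rw [ha, hb, add_assoc]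

variable {μ : EuclideanSpace ℝ (Fin n)} {S : Matrix (Fin n) (Fin n) ℝ}

include h2 in
lemma integral_apply_eq (hm : meanVec P = μ) (i : Fin n) : ∫ x, x i ∂P = μ i := by
  have h := (EuclideanSpace.proj (𝕜 := ℝ) i).integral_comp_comm (int_id h2)
  simp only [PiLp.proj_apply, EuclideanSpace.proj] at h
  rw [show (∫ x, x ∂P) = meanVec P from rfl, hm] at h
  simpa using h

include h2 in
lemma integral_lin (hm : meanVec P = μ) (α : EuclideanSpace ℝ (Fin n)) (b : ℝ) :
    ∫ x, ((∑ i, α i * x i) + b) ∂P = (∑ i, α i * μ i) + b := by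
  rw [integral_add (integrable_finset_sum _ (fun i _ => (int_apply h2 i).const_mul (α i)))
    (integrable_const b), integral_finset_sum _ (fun i _ => (int_apply h2 i).const_mul (α i))]
  have : ∀ i : Fin n, ∫ x, α i * x i ∂P = α i * μ i := fun i => by
    rw [integral_const_mul, integral_apply_eq h2 hm]
  simp only [this]
  simp [measure_univ]

include h2 in
lemma integral_prod_eq (hm : meanVec P = μ) (hcov : covMatrix P = S) (i j : Fin n) :
    ∫ x, (x i - μ i) * (x j - μ j) ∂P = S i j := by
  rw [← hcov]
  simp only [covMatrix, Matrix.of_apply, hm]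

include h2 in
lemma integral_lin_sq (hm : meanVec P = μ) (hcov : covMatrix P = S)
    (α : EuclideanSpace ℝ (Fin n)) (u : ℝ) :
    ∫ x, ((∑ i, α i * (x i - μ i)) + u)^2 ∂P
      = (∑ i, ∑ j, α i * S i j * α j) + u^2 := by
  have hint1 : Integrable (fun x : EuclideanSpace ℝ (Fin n) =>
      ∑ i, ∑ j, (α i * α j) * ((x i - μ i) * (x j - μ j))) P :=
    integrable_finset_sum _ (fun i _ => integrable_finset_sum _
      (fun j _ => (int_prod_shift h2 i j (μ i) (μ j)).const_mul _))
  have hint2 : Integrable (fun x : EuclideanSpace ℝ (Fin n) =>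
      ∑ i, (2*u*α i) * (x i - μ i)) P :=
    integrable_finset_sum _ (fun i _ => ((int_apply h2 i).sub
      (integrable_const (μ i))).const_mul _)
  have E1 : ∫ x, (∑ i, ∑ j, (α i * α j) * ((x i - μ i) * (x j - μ j))) ∂P
      = ∑ i, ∑ j, α i * S i j * α j := by
    rw [integral_finset_sum _ (fun i _ => integrable_finset_sum _
      (fun j _ => (int_prod_shift h2 i j (μ i) (μ j)).const_mul _))]
    refine Finset.sum_congr rfl fun i _ => ?_
    rw [integral_finset_sum
      (f := fun j (x : EuclideanSpace ℝ (Fin n)) => (α i * α j) * ((x i - μ i) * (x j - μ j)))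
      _ (fun j _ => (int_prod_shift h2 i j (μ i) (μ j)).const_mul _)]
    refine Finset.sum_congr rfl fun j _ => ?_
    rw [integral_const_mul, integral_prod_eq h2 hm hcov]; ring
  have E2 : ∫ x, (∑ i, (2*u*α i) * (x i - μ i)) ∂P = 0 := by
    rw [integral_finset_sum
      (f := fun i (x : EuclideanSpace ℝ (Fin n)) => (2*u*α i) * (x i - μ i))
      _ (fun i _ => ((int_apply h2 i).sub (integrable_const (μ i))).const_mul _)]
    refine Finset.sum_eq_zero fun i _ => ?_
    rw [integral_const_mul, integral_sub (int_apply h2 i) (integrable_const _),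
      integral_apply_eq h2 hm]
    simp [measure_univ]
  have hint3 : Integrable (fun x : EuclideanSpace ℝ (Fin n) =>
      (∑ i, (2*u*α i) * (x i - μ i)) + u^2) P := hint2.add (integrable_const _)
  calc ∫ x, ((∑ i, α i * (x i - μ i)) + u)^2 ∂P
      = ∫ x, ((∑ i, ∑ j, (α i * α j) * ((x i - μ i) * (x j - μ j)))
          + ((∑ i, (2*u*α i) * (x i - μ i)) + u^2)) ∂P := by
        exact integral_congr_ae (Filter.Eventually.of_forall (expand_sq α μ u))
    _ = (∑ i, ∑ j, α i * S i j * α j) + u^2 := by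
        rw [integral_add hint1 hint3, integral_add hint2 (integrable_const _), E1, E2]
        simp [measure_univ]

section Upper
variable {γ : ℝ} (hγ0 : 0 < γ) (hγ1 : γ < 1)

include h2 hγ0 hγ1 in
set_option maxHeartbeats 1000000 in
lemma cvar_upper (hm : meanVec P = μ) (hcov : covMatrix P = S)
    (α : EuclideanSpace ℝ (Fin n)) (β : ℝ)
    (hs2 : 0 < ∑ i, ∑ j, α i * S i j * α j) :
    CVaR γ P (fun x => (∑ i, α i * x i) + β)
      ≤ β + (∑ i, α i * μ i) +
        Real.sqrt ((1 - γ) / γ) * Real.sqrt (∑ i, ∑ j, α i * S i j * α j) := by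
  set s2 : ℝ := ∑ i, ∑ j, α i * S i j * α j with hs2def
  set m : ℝ := ∑ i, α i * μ i with hmdef
  set f : EuclideanSpace ℝ (Fin n) → ℝ := fun x => (∑ i, α i * x i) + β with hfdef
  have hf_int : Integrable f P := int_lin h2 α β
  have hEf : ∫ x, f x ∂P = m + β := integral_lin h2 hm α β
  have int_max : ∀ τ : ℝ, Integrable (fun x => max (f x - τ) 0) P := fun τ =>
    (hf_int.sub (integrable_const τ)).pos_part
  have int_max_nonneg : ∀ τ : ℝ, 0 ≤ ∫ x, max (f x - τ) 0 ∂P := fun τ =>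
    integral_nonneg fun x => le_max_right _ _
  have hγinv : 1 ≤ 1/γ := by rw [le_div_iff₀ hγ0]; linarith
  have hlb : ∀ τ : ℝ, (m + β : ℝ) ≤ τ + (1/γ) * ∫ x, max (f x - τ) 0 ∂P := by
    intro τ
    rcases le_or_gt τ (m + β) with hτ | hτ
    · have h1 : ∫ x, (f x - τ) ∂P ≤ ∫ x, max (f x - τ) 0 ∂P :=
        integral_mono (hf_int.sub (integrable_const τ)) (int_max τ)
          (fun x => le_max_left _ _)
      rw [integral_sub hf_int (integrable_const τ), hEf] at h1
      simp only [integral_const, measure_univ, probReal_univ, ENNReal.toReal_one, smul_eq_mul, one_mul] at h1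
      have h2 : (1/γ) * (m + β - τ) ≤ (1/γ) * ∫ x, max (f x - τ) 0 ∂P :=
        mul_le_mul_of_nonneg_left h1 (by positivity)
      nlinarith [h2]
    · have := mul_le_mul_of_nonneg_left (int_max_nonneg τ) (le_of_lt (by positivity : (0:ℝ) < 1/γ))
      nlinarith [this]
  have hbdd : BddBelow (Set.range fun τ : ℝ => τ + (1/γ) * ∫ x, max (f x - τ) 0 ∂P) := by
    refine ⟨m + β, ?_⟩
    rintro _ ⟨τ, rfl⟩
    exact hlb τ
  -- square-root quantities
  set g1 : ℝ := Real.sqrt γ with hg1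
  set g2 : ℝ := Real.sqrt (1 - γ) with hg2
  set s : ℝ := Real.sqrt s2 with hsdef
  have hg1p : 0 < g1 := Real.sqrt_pos.2 hγ0
  have hg2p : 0 < g2 := Real.sqrt_pos.2 (by linarith)
  have hsp : 0 < s := Real.sqrt_pos.2 hs2
  have hg1sq : g1^2 = γ := Real.sq_sqrt hγ0.le
  have hg2sq : g2^2 = 1 - γ := Real.sq_sqrt (by linarith)
  have hssq : s^2 = s2 := Real.sq_sqrt hs2.le
  set a : ℝ := s / (2 * (g1 * g2)) with hadef
  have hap : 0 < a := by positivity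
  clear_value a
  set τ0 : ℝ := (m + β) + a - 2*a*γ with hτ0
  have key : CVaR γ P f ≤ τ0 + (1/γ) * ∫ x, max (f x - τ0) 0 ∂P := ciInf_le hbdd τ0
  -- value of the quadratic integral
  have hval : ∫ x, (f x - τ0 + a)^2 ∂P = s2 + (2*a*γ)^2 := by
    have hcong : ∀ x : EuclideanSpace ℝ (Fin n),
        (f x - τ0 + a)^2 = ((∑ i, α i * (x i - μ i)) + 2*a*γ)^2 := by
      intro x
      have : (∑ i, α i * (x i - μ i)) = (∑ i, α i * x i) - m := by
        rw [hmdef, ← Finset.sum_sub_distrib]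
        exact Finset.sum_congr rfl fun i _ => by ring
      rw [this, hfdef, hτ0]; ring_nf
    rw [integral_congr_ae (Filter.Eventually.of_forall hcong),
      integral_lin_sq h2 hm hcov α (2*a*γ)]
  have hint_sq : Integrable (fun x => (f x - τ0 + a)^2) P := by
    have := int_lin_sq h2 α μ (2*a*γ)
    refine this.congr (Filter.Eventually.of_forall fun x => ?_)
    have hc : (∑ i, α i * (x i - μ i)) = (∑ i, α i * x i) - m := by
      rw [hmdef, ← Finset.sum_sub_distrib]
      exact Finset.sum_congr rfl fun i _ => by ring
    show ((∑ i, α i * (x i - μ i)) + 2*a*γ)^2 = (f x - τ0 + a)^2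
    rw [hc, hfdef, hτ0]; ring_nf
  have hmax_le : ∫ x, max (f x - τ0) 0 ∂P ≤ (1/(4*a)) * (s2 + (2*a*γ)^2) := by
    rw [← hval, ← integral_const_mul]
    refine integral_mono (int_max τ0) (hint_sq.const_mul _) fun x => ?_
    have h4a : (0:ℝ) < 4*a := by positivity
    refine max_le ?_ (by positivity)
    rw [one_div, inv_mul_eq_div, le_div_iff₀ h4a]
    nlinarith [sq_nonneg (f x - τ0 - a)]
  have step : CVaR γ P f ≤ τ0 + (1/γ) * ((1/(4*a)) * (s2 + (2*a*γ)^2)) := by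
    refine key.trans ?_
    have := mul_le_mul_of_nonneg_left hmax_le (le_of_lt (by positivity : (0:ℝ) < 1/γ))
    linarith
  refine step.trans (le_of_eq ?_)
  have hsqrtdiv : Real.sqrt ((1-γ)/γ) = g2 / g1 := Real.sqrt_div (by linarith) γ
  have hs_eq : s = 2*(g1*g2)*a := by
    rw [hadef]; field_simp
  have h1 : s2 = 4*g1^2*g2^2*a^2 := by rw [← hssq, hs_eq]; ring
  rw [hsqrtdiv, hτ0, h1, hs_eq, ← hg1sq]
  have hrel : g2^2 = 1 - g1^2 := by rw [hg2sq, hg1sq]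
  have hg1ne : g1 ≠ 0 := ne_of_gt hg1p
  have hane : a ≠ 0 := ne_of_gt hap
  field_simp
  linear_combination (-4*a) * hrel

end Upper

section Mix

variable {V : Type*} [NormedAddCommGroup V] [NormedSpace ℝ V] [CompleteSpace V]
variable {E : Type*} [MeasurableSpace E] [MeasurableSingletonClass E]
variable {ι : Type*} [Fintype ι]

lemma integrable_dirac' (a : E) {f : E → V} (hf : StronglyMeasurable f) :
    Integrable f (Measure.dirac a) := by
  refine ⟨hf.aestronglyMeasurable, ?_⟩
  rw [MeasureTheory.HasFiniteIntegral, lintegral_dirac' a hf.enorm]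
  exact enorm_lt_top

lemma integrable_mix (p : ι → ℝ) (pt : ι → E) {f : E → V} (hf : StronglyMeasurable f) :
    Integrable f (∑ t : ι, ENNReal.ofReal (p t) • Measure.dirac (pt t)) := by
  rw [integrable_finset_sum_measure]
  exact fun t _ => (integrable_dirac' (pt t) hf).smul_measure ENNReal.ofReal_ne_top

lemma integral_mix (p : ι → ℝ) (hp : ∀ t, 0 ≤ p t) (pt : ι → E) {f : E → V}
    (hf : StronglyMeasurable f) :
    ∫ x, f x ∂(∑ t : ι, ENNReal.ofReal (p t) • Measure.dirac (pt t))
      = ∑ t : ι, p t • f (pt t) := by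
  rw [integral_finset_sum_measure
    (fun t _ => (integrable_dirac' (pt t) hf).smul_measure ENNReal.ofReal_ne_top)]
  refine Finset.sum_congr rfl fun t _ => ?_
  rw [integral_smul_measure, integral_dirac, ENNReal.toReal_ofReal (hp t)]

end Mix

section Sums

variable (γ : ℝ)

abbrev ι' (n : ℕ) := Bool × Bool × Fin n

def cwgt (n : ℕ) (γ : ℝ) : ι' n → ℝ := fun t => (if t.1 then γ else 1-γ) / (2*n)

lemma cwgt_nonneg (hγ0 : 0 < γ) (hγ1 : γ < 1) (t : ι' n) : 0 ≤ cwgt n γ t := by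
  unfold cwgt
  have : (0:ℝ) ≤ (if t.1 then γ else 1-γ) := by
    cases t.1 <;> simp <;> linarith
  positivity

lemma sum_cwgt_mul (hn : 0 < n) (G : Bool → ℝ) :
    ∑ t : ι' n, cwgt n γ t * G t.1 = γ * G true + (1-γ) * G false := by
  have hn' : (n:ℝ) ≠ 0 := Nat.cast_ne_zero.2 hn.ne'
  rw [Fintype.sum_prod_type, Fintype.sum_bool]
  have h : ∀ ε : Bool, ∑ _u : Bool × Fin n, cwgt n γ (ε, _u) * G ε
      = (if ε then γ else 1-γ) * G ε := by
    intro ε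
    simp only [cwgt]
    rw [Finset.sum_const (b := (if ε then γ else 1-γ) / (2*n) * G ε)]
    simp only [Finset.sum_const, Finset.card_univ, Fintype.card_prod, Fintype.card_bool,
      Fintype.card_fin, nsmul_eq_mul, Nat.cast_mul, Nat.cast_ofNat]
    field_simp
  rw [h true, h false]
  simp

lemma sum_sign_zero (c : ι' n → ℝ) (hc : ∀ ε i, c (ε, true, i) = - c (ε, false, i)) :
    ∑ t : ι' n, c t = 0 := by
  rw [Fintype.sum_prod_type]
  refine Finset.sum_eq_zero fun ε _ => ?_
  rw [Fintype.sum_prod_type, Fintype.sum_bool, ← Finset.sum_add_distrib]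
  refine Finset.sum_eq_zero fun i _ => ?_
  rw [hc ε i]; ring

lemma sum_cwgt_n (hn : 0 < n) (d : Fin n → ℝ) :
    ∑ t : ι' n, cwgt n γ t * ((n:ℝ) * d t.2.2) = ∑ i, d i := by
  have hn' : (n:ℝ) ≠ 0 := Nat.cast_ne_zero.2 hn.ne'
  rw [Fintype.sum_prod_type, Fintype.sum_bool]
  have h : ∀ ε : Bool, ∑ u : Bool × Fin n, cwgt n γ (ε, u) * ((n:ℝ) * d u.2)
      = (if ε then γ else 1-γ) * ∑ i, d i := by
    intro ε
    rw [Fintype.sum_prod_type, Fintype.sum_bool, ← Finset.sum_add_distrib, Finset.mul_sum]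
    refine Finset.sum_congr rfl fun i _ => ?_
    simp only [cwgt]
    field_simp
    split_ifs <;> ring
  rw [h true, h false]
  simp
  ring
end Sums

open scoped MatrixOrder in
set_option maxHeartbeats 2000000 in
lemma exists_extremal (hn : 0 < n) {γ : ℝ} (hγ0 : 0 < γ) (hγ1 : γ < 1)
    (α μ : EuclideanSpace ℝ (Fin n)) (hα : α ≠ 0) (β : ℝ)
    (S : Matrix (Fin n) (Fin n) ℝ) (hS : S.PosDef) :
    ∃ P : Measure (EuclideanSpace ℝ (Fin n)), IsProbabilityMeasure P ∧ FiniteSecondMoment P ∧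
      meanVec P = μ ∧ covMatrix P = S ∧
      β + (∑ i, α i * μ i) +
          Real.sqrt ((1 - γ) / γ) * Real.sqrt (∑ i, ∑ j, α i * S i j * α j)
        ≤ CVaR γ P (fun x => (∑ i, α i * x i) + β) := by
  classical
  have hγ1' : (0:ℝ) < 1 - γ := by linarith
  -- basic quadratic form facts
  have hSt : Sᵀ = S := by
    rw [← Matrix.conjTranspose_eq_transpose_of_trivial, hS.isHermitian]
  have hsym : ∀ u v : Fin n → ℝ, u ⬝ᵥ S *ᵥ v = v ⬝ᵥ S *ᵥ u := by
    intro u v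
    rw [Matrix.dotProduct_mulVec, ← Matrix.mulVec_transpose, hSt, dotProduct_comm]
  have hα' : (α : Fin n → ℝ) ≠ 0 := by
    intro h
    apply hα
    ext i
    simpa using congrFun h i
  set αf : Fin n → ℝ := fun i => α i with hαf
  have hαf' : αf ≠ 0 := by
    intro h
    exact hα' (funext fun i => congrFun h i)
  have hs2 : 0 < αf ⬝ᵥ S *ᵥ αf := by
    have := hS.dotProduct_mulVec_pos hαf'
    simpa using this
  have hdot : αf ⬝ᵥ S *ᵥ αf = ∑ i, ∑ j, α i * S i j * α j := by
    simp only [dotProduct, Matrix.mulVec, Finset.mul_sum]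
    exact Finset.sum_congr rfl fun i _ => Finset.sum_congr rfl fun j _ => by ring
  set s2 : ℝ := αf ⬝ᵥ S *ᵥ αf with hs2def
  set g1 : ℝ := Real.sqrt γ with hg1
  set g2 : ℝ := Real.sqrt (1 - γ) with hg2
  set s : ℝ := Real.sqrt s2 with hsdef
  have hg1p : 0 < g1 := Real.sqrt_pos.2 hγ0
  have hg2p : 0 < g2 := Real.sqrt_pos.2 hγ1'
  have hsp : 0 < s := Real.sqrt_pos.2 hs2
  have hg1sq : g1^2 = γ := Real.sq_sqrt hγ0.le
  have hg2sq : g2^2 = 1 - γ := Real.sq_sqrt hγ1'.le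
  have hssq : s^2 = s2 := Real.sq_sqrt hs2.le
  set k : ℝ := g2 / g1 with hk
  set k' : ℝ := g1 / g2 with hk'
  have hrel : g1^2 + g2^2 = 1 := by rw [hg1sq, hg2sq]; ring
  have hk1 : γ * k = (1-γ) * k' := by
    rw [hk, hk', ← hg2sq, ← hg1sq]
    field_simp
  have hk2 : γ * k^2 + (1-γ) * k'^2 = 1 := by
    rw [hk, hk', ← hg2sq, ← hg1sq]
    field_simp
    linear_combination hrel
  -- vector w and matrix B
  set w : Fin n → ℝ := fun j => s⁻¹ * (S *ᵥ αf) j with hw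
  have hαw : ∑ i, αf i * w i = s := by
    have : ∑ i, αf i * w i = s⁻¹ * (αf ⬝ᵥ S *ᵥ αf) := by
      rw [dotProduct, Finset.mul_sum]
      exact Finset.sum_congr rfl fun i _ => by rw [hw]; ring
    rw [this, ← hs2def, ← hssq]
    field_simp
  have hwdot : ∀ x : Fin n → ℝ, w ⬝ᵥ x = s⁻¹ * ((S *ᵥ αf) ⬝ᵥ x) := by
    intro x
    rw [dotProduct, dotProduct, Finset.mul_sum]
    exact Finset.sum_congr rfl fun i _ => by rw [hw]; ring
  set M : Matrix (Fin n) (Fin n) ℝ := S - Matrix.vecMulVec w w with hM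
  have hvmv : ∀ x : Fin n → ℝ, Matrix.vecMulVec w w *ᵥ x = (w ⬝ᵥ x) • w := by
    intro x
    funext i
    simp only [Matrix.mulVec, Matrix.vecMulVec_apply, dotProduct, Pi.smul_apply,
      smul_eq_mul]
    rw [Finset.sum_mul]
    exact Finset.sum_congr rfl fun j _ => by ring
  have hCS : ∀ x : Fin n → ℝ, ((S *ᵥ αf) ⬝ᵥ x)^2 ≤ s2 * (x ⬝ᵥ S *ᵥ x) := by
    intro x
    set d : ℝ := (S *ᵥ αf) ⬝ᵥ x with hd
    have hd' : αf ⬝ᵥ S *ᵥ x = d := by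
      rw [hd, Matrix.dotProduct_mulVec, ← Matrix.mulVec_transpose, hSt]
    have hq := hS.posSemidef.dotProduct_mulVec_nonneg (x + (-(d/s2)) • αf)
    simp only [star_trivial] at hq
    rw [Matrix.mulVec_add, Matrix.mulVec_smul, add_dotProduct,
      smul_dotProduct, dotProduct_add, dotProduct_add,
      dotProduct_smul, dotProduct_smul] at hq
    have hsymx : x ⬝ᵥ S *ᵥ αf = d := by rw [hsym x αf, hd']
    rw [hsymx, hd', ← hs2def] at hq
    simp only [smul_eq_mul] at hq
    have hs2ne : s2 ≠ 0 := ne_of_gt hs2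
    have h0 : -(d / s2) * s2 = -d := by field_simp
    rw [h0, add_neg_cancel, mul_zero, add_zero] at hq
    have hq2 : 0 ≤ s2 * (x ⬝ᵥ S *ᵥ x + -(d/s2)*d) := mul_nonneg hs2.le hq
    have hexp : s2 * (x ⬝ᵥ S *ᵥ x + -(d/s2)*d) = s2 * (x ⬝ᵥ S *ᵥ x) - d^2 := by
      field_simp
      ring
    rw [hexp] at hq2
    linarith
  have hMpsd : M.PosSemidef := by
    refine Matrix.PosSemidef.of_dotProduct_mulVec_nonneg ?_ ?_
    · refine Matrix.IsHermitian.sub hS.isHermitian ?_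
      ext i j
      simp [Matrix.conjTranspose_apply, Matrix.vecMulVec_apply, mul_comm]
    · intro x
      simp only [star_trivial]
      rw [hM, Matrix.sub_mulVec, dotProduct_sub, hvmv, dotProduct_smul]
      have h1 := hCS x
      have hwx : w ⬝ᵥ x = s⁻¹ * ((S *ᵥ αf) ⬝ᵥ x) := hwdot x
      have hxw : x ⬝ᵥ w = s⁻¹ * ((S *ᵥ αf) ⬝ᵥ x) := by
        rw [dotProduct_comm]; exact hwdot x
      have hs2ne : s2 ≠ 0 := ne_of_gt hs2
      have hsne : s ≠ 0 := ne_of_gt hsp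
      have hinv : s⁻¹ * s⁻¹ * s2 = 1 := by
        rw [← hssq]; field_simp
      simp only [smul_eq_mul, hwx, hxw]
      nlinarith [h1, sq_nonneg ((S *ᵥ αf) ⬝ᵥ x), hs2, mul_pos (inv_pos.2 hsp) (inv_pos.2 hsp)]
  set B : Matrix (Fin n) (Fin n) ℝ := CFC.sqrt M with hB
  have hBB : B * B = M := CFC.sqrt_mul_sqrt_self M hMpsd.nonneg
  have hBsym : Bᵀ = B := by
    rw [← Matrix.conjTranspose_eq_transpose_of_trivial, (CFC.sqrt_nonneg M).posSemidef.isHermitian]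
  have hαMα : αf ⬝ᵥ M *ᵥ αf = 0 := by
    rw [hM, Matrix.sub_mulVec, dotProduct_sub, hvmv, dotProduct_smul]
    have h2 : αf ⬝ᵥ w = s := hαw
    have h1 : w ⬝ᵥ αf = s := by rw [dotProduct_comm]; exact h2
    rw [h1, h2]
    simp only [smul_eq_mul]
    linear_combination -hssq
  have hBα : B *ᵥ αf = 0 := by
    have hMB : αf ⬝ᵥ M *ᵥ αf = (B *ᵥ αf) ⬝ᵥ (B *ᵥ αf) := by
      rw [← hBB, ← Matrix.mulVec_mulVec, Matrix.dotProduct_mulVec, ← Matrix.mulVec_transpose,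
        hBsym]
    exact dotProduct_self_eq_zero.mp (by rw [← hMB, hαMα])
  have hαfi : ∀ i, αf i = α i := fun _ => rfl
  have hsymB : ∀ u v, B u v = B v u := fun u v => by
    conv_lhs => rw [← hBsym, Matrix.transpose_apply]
  have hαB' : ∀ u, ∑ i, α i * B i u = 0 := by
    intro u
    have h0 : (Bᵀ *ᵥ αf) u = 0 := by rw [hBsym, hBα]; rfl
    have h1 : (Bᵀ *ᵥ αf) u = ∑ i, α i * B i u := by
      simp only [Matrix.mulVec, dotProduct, Matrix.transpose_apply]
      exact Finset.sum_congr rfl fun i _ => by rw [hαfi]; ring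
    rw [← h1, h0]
  have hαw' : ∑ i, α i * w i = s := hαw
  have hBBij : ∀ i j, ∑ u, B i u * B j u = S i j - w i * w j := by
    intro i j
    have h1 : M i j = S i j - w i * w j := by
      rw [hM]
      simp [Matrix.sub_apply, Matrix.vecMulVec_apply]
    have h2 : (B * B) i j = ∑ u, B i u * B u j := Matrix.mul_apply
    rw [← h1, ← hBB, h2]
    exact Finset.sum_congr rfl fun u _ => by rw [hsymB u j]
  -- the discrete measure
  set y : Bool → ℝ := fun ε => if ε then k else -k' with hy
  have hyT : y true = k := rfl
  have hyF : y false = -k' := rfl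
  set q : Bool → ℝ := fun σ => if σ then Real.sqrt n else -Real.sqrt n with hqdef
  have hq2 : ∀ σ, q σ ^ 2 = (n:ℝ) := by
    intro σ
    have hqt : q true = Real.sqrt n := rfl
    have hqf : q false = -Real.sqrt n := rfl
    cases σ
    · rw [hqf, neg_sq, Real.sq_sqrt (Nat.cast_nonneg n)]
    · rw [hqt, Real.sq_sqrt (Nat.cast_nonneg n)]
  set pt : ι' n → EuclideanSpace ℝ (Fin n) := fun t =>
    (WithLp.toLp 2
      fun j => μ j + y t.1 * w j + q t.2.1 * (B *ᵥ Pi.single t.2.2 1) j) with hpt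
  have hptapp : ∀ t j, pt t j = μ j + y t.1 * w j + q t.2.1 * B j t.2.2 := by
    intro t j
    show μ j + y t.1 * w j + q t.2.1 * (B *ᵥ Pi.single t.2.2 1) j = _
    rw [Matrix.mulVec_single]
    simp
  set P : Measure (EuclideanSpace ℝ (Fin n)) :=
    ∑ t : ι' n, ENNReal.ofReal (cwgt n γ t) • Measure.dirac (pt t) with hP
  have hp : ∀ t, 0 ≤ cwgt n γ t := cwgt_nonneg γ hγ0 hγ1
  -- probability
  have hwsum : ∑ t : ι' n, cwgt n γ t = 1 := by
    have h := sum_cwgt_mul γ hn (fun _ => 1)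
    simpa using h
  have hprob : IsProbabilityMeasure P := by
    constructor
    rw [hP, Measure.finset_sum_apply]
    simp only [Measure.smul_apply, MeasureTheory.Measure.dirac_apply_of_mem (Set.mem_univ _),
      smul_eq_mul, mul_one]
    rw [← ENNReal.ofReal_sum_of_nonneg (fun t _ => hp t), hwsum, ENNReal.ofReal_one]
  -- measurability helpers
  have hcontf : Continuous (fun x : EuclideanSpace ℝ (Fin n) => (∑ i, α i * x i) + β) :=
    (continuous_finset_sum _ fun i _ =>
      continuous_const.mul (EuclideanSpace.proj (𝕜 := ℝ) i).continuous).add continuous_const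
  have hmeas_sq : StronglyMeasurable (fun x : EuclideanSpace ℝ (Fin n) => ‖x‖^2) :=
    ((continuous_norm).pow 2).stronglyMeasurable
  have hmeas_ij : ∀ i j, StronglyMeasurable
      (fun x : EuclideanSpace ℝ (Fin n) => (x i - μ i) * (x j - μ j)) := fun i j =>
    (((EuclideanSpace.proj (𝕜 := ℝ) i).continuous.sub continuous_const).mul
      ((EuclideanSpace.proj (𝕜 := ℝ) j).continuous.sub continuous_const)).stronglyMeasurable
  have hmeas_id : StronglyMeasurable (fun x : EuclideanSpace ℝ (Fin n) => x) :=
    stronglyMeasurable_id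
  -- second moment
  have hfsm : FiniteSecondMoment P := by
    rw [FiniteSecondMoment, hP]
    exact integrable_mix _ _ hmeas_sq
  -- mean
  have hmean_comp : ∀ j, ∑ t : ι' n, cwgt n γ t * pt t j = μ j := by
    intro j
    have hsplit : ∀ t : ι' n, cwgt n γ t * pt t j
        = cwgt n γ t * ((fun ε => μ j + y ε * w j) t.1)
          + (cwgt n γ t * (q t.2.1 * B j t.2.2)) := by
      intro t
      rw [hptapp]
      ring
    have hs1 := sum_cwgt_mul (n := n) γ hn (fun ε => μ j + y ε * w j)
    have hs2 : ∑ t : ι' n, cwgt n γ t * (q t.2.1 * B j t.2.2) = 0 := by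
      refine sum_sign_zero _ fun ε i => ?_
      have hc : cwgt n γ (ε, true, i) = cwgt n γ (ε, false, i) := rfl
      have hqt : q true = Real.sqrt n := rfl
      have hqf : q false = -Real.sqrt n := rfl
      rw [hc, hqt, hqf]
      ring
    rw [Finset.sum_congr rfl (fun t _ => hsplit t), Finset.sum_add_distrib, hs1, hs2, hyT, hyF]
    linear_combination (w j) * hk1
  have hint_id : Integrable (fun x : EuclideanSpace ℝ (Fin n) => x) P := by
    rw [hP]; exact integrable_mix _ _ hmeas_id
  have hmean : meanVec P = μ := by
    have hproj : ∀ j, (∫ x, x ∂P) j = μ j := by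
      intro j
      have h1 := (EuclideanSpace.proj (𝕜 := ℝ) j).integral_comp_comm hint_id
      simp only [PiLp.proj_apply, EuclideanSpace.proj] at h1
      have h2 : ∫ x, x j ∂P = ∑ t : ι' n, cwgt n γ t • pt t j := by
        rw [hP]
        exact integral_mix _ hp pt
          ((EuclideanSpace.proj (𝕜 := ℝ) j).continuous.stronglyMeasurable)
      rw [← h1, h2]
      simp only [smul_eq_mul]
      exact hmean_comp j
    ext j; exact hproj j
  -- covariance
  have hcov_comp : ∀ i j, ∑ t : ι' n, cwgt n γ t * ((pt t i - μ i) * (pt t j - μ j)) = S i j := by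
    intro i j
    have hsplit : ∀ t : ι' n, cwgt n γ t * ((pt t i - μ i) * (pt t j - μ j))
        = cwgt n γ t * ((fun ε => (y ε)^2 * (w i * w j)) t.1)
          + ((cwgt n γ t * (y t.1 * (q t.2.1 * (w i * B j t.2.2 + w j * B i t.2.2))))
            + cwgt n γ t * ((n:ℝ) * (B i t.2.2 * B j t.2.2))) := by
      intro t
      rw [hptapp, hptapp, ← hq2 t.2.1]
      ring
    have hs1 := sum_cwgt_mul (n := n) γ hn (fun ε => (y ε)^2 * (w i * w j))
    have hs2 : ∑ t : ι' n,
        cwgt n γ t * (y t.1 * (q t.2.1 * (w i * B j t.2.2 + w j * B i t.2.2))) = 0 := by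
      refine sum_sign_zero _ fun ε u => ?_
      have hc : cwgt n γ (ε, true, u) = cwgt n γ (ε, false, u) := rfl
      have hyc : (y (ε, true, u).1 : ℝ) = y (ε, false, u).1 := rfl
      have hqt : q true = Real.sqrt n := rfl
      have hqf : q false = -Real.sqrt n := rfl
      rw [hc, hqt, hqf]
      ring
    have hs3 := sum_cwgt_n (n := n) γ hn (fun u => B i u * B j u)
    rw [Finset.sum_congr rfl (fun t _ => hsplit t), Finset.sum_add_distrib,
      Finset.sum_add_distrib, hs1, hs2, hs3, hyT, hyF, hBBij i j]
    linear_combination (w i * w j) * hk2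
  have hcov : covMatrix P = S := by
    have : ∀ i j, covMatrix P i j = S i j := by
      intro i j
      show ∫ x, (x i - meanVec P i) * (x j - meanVec P j) ∂P = S i j
      rw [hmean]
      have h2 : ∫ x, (x i - μ i) * (x j - μ j) ∂P
          = ∑ t : ι' n, cwgt n γ t • ((pt t i - μ i) * (pt t j - μ j)) := by
        rw [hP]
        exact integral_mix _ hp pt (hmeas_ij i j)
      rw [h2]
      simp only [smul_eq_mul]
      exact hcov_comp i j
    exact Matrix.ext this
  -- CVaR lower bound
  have hfval : ∀ t : ι' n, (∑ i, α i * pt t i) + β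
      = ((∑ i, α i * μ i) + β) + y t.1 * s := by
    intro t
    have e : ∑ i, α i * pt t i
        = (∑ i, α i * μ i) + (y t.1 * ∑ i, α i * w i)
          + (q t.2.1 * ∑ i, α i * B i t.2.2) := by
      rw [Finset.mul_sum, Finset.mul_sum, ← Finset.sum_add_distrib, ← Finset.sum_add_distrib]
      refine Finset.sum_congr rfl fun i _ => ?_
      rw [hptapp]
      ring
    rw [e, hαw', hαB', mul_zero]
    ring
  have hkval : Real.sqrt ((1-γ)/γ) = k := by
    rw [hk, Real.sqrt_div hγ1'.le γ, ← hg1, ← hg2]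
  have hsval : Real.sqrt (∑ i, ∑ j, α i * S i j * α j) = s := by
    rw [← hdot, ← hsdef]
  rw [hkval, hsval]
  refine ⟨P, hprob, hfsm, hmean, hcov, ?_⟩
  refine le_ciInf fun τ => ?_
  have hmeasmax : StronglyMeasurable
      (fun x : EuclideanSpace ℝ (Fin n) => max ((∑ i, α i * x i) + β - τ) 0) :=
    ((hcontf.sub continuous_const).max continuous_const).stronglyMeasurable
  have hintegral : ∫ x, max ((∑ i, α i * x i) + β - τ) 0 ∂P
      = γ * max ((((∑ i, α i * μ i) + β) + k * s) - τ) 0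
        + (1-γ) * max ((((∑ i, α i * μ i) + β) + (-k') * s) - τ) 0 := by
    have h1 : ∫ x, max ((∑ i, α i * x i) + β - τ) 0 ∂P
        = ∑ t : ι' n, cwgt n γ t • max ((∑ i, α i * pt t i) + β - τ) 0 := by
      rw [hP]
      exact integral_mix _ hp pt hmeasmax
    rw [h1]
    have h2 : ∀ t : ι' n, cwgt n γ t • max ((∑ i, α i * pt t i) + β - τ) 0
        = cwgt n γ t * ((fun ε => max ((((∑ i, α i * μ i) + β) + y ε * s) - τ) 0) t.1) := by
      intro t
      rw [smul_eq_mul]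
      congr 1
      rw [show (∑ i, α i * pt t i) + β - τ = ((∑ i, α i * pt t i) + β) - τ by ring, hfval t]
    have hs1 := sum_cwgt_mul (n := n) γ hn
      (fun ε => max ((((∑ i, α i * μ i) + β) + y ε * s) - τ) 0)
    rw [Finset.sum_congr rfl fun t _ => h2 t, hs1, hyT, hyF]
  rw [hintegral]
  set A : ℝ := (((∑ i, α i * μ i) + β) + k * s) - τ with hA
  set A' : ℝ := (((∑ i, α i * μ i) + β) + (-k') * s) - τ with hA'
  have h1 : A ≤ max A 0 := le_max_left _ _
  have h2 : (0:ℝ) ≤ max A' 0 := le_max_right _ _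
  have h3 : (0:ℝ) ≤ (1/γ) * ((1-γ) * max A' 0) := by positivity
  have e : (1/γ) * (γ * max A 0 + (1-γ) * max A' 0)
      = max A 0 + (1/γ) * ((1-γ) * max A' 0) := by
    field_simp
  rw [e]
  have : A ≤ max A 0 + (1/γ) * ((1-γ) * max A' 0) := by linarith
  rw [hA] at this
  linarith



lemma s2_pos {n : ℕ} {S : Matrix (Fin n) (Fin n) ℝ} (hS : S.PosDef)
    (α : EuclideanSpace ℝ (Fin n)) (hα : α ≠ 0) :
    0 < ∑ i, ∑ j, α i * S i j * α j := by
  have hα' : (fun i => α i : Fin n → ℝ) ≠ 0 := fun h => hα (by ext i; simpa using congrFun h i)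
  have h := hS.dotProduct_mulVec_pos hα'
  simp only [star_trivial] at h
  have hdot : (fun i => α i : Fin n → ℝ) ⬝ᵥ S *ᵥ (fun i => α i)
      = ∑ i, ∑ j, α i * S i j * α j := by
    simp only [dotProduct, Matrix.mulVec, Finset.mul_sum]
    exact Finset.sum_congr rfl fun i _ => Finset.sum_congr rfl fun j _ => by ring
  rw [← hdot]
  exact h

end Helpers

-- STATEMENT 4
theorem stmt4 {n : ℕ} (γ : ℝ) (hγ0 : 0 < γ) (hγ1 : γ < 1)
    (α μ : EuclideanSpace ℝ (Fin n)) (hα : α ≠ 0) (β : ℝ)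
    (S : Matrix (Fin n) (Fin n) ℝ) (hS : S.PosDef) :
    IsLUB {r : ℝ | ∃ P : Measure (EuclideanSpace ℝ (Fin n)),
        IsProbabilityMeasure P ∧ FiniteSecondMoment P ∧ meanVec P = μ ∧ covMatrix P = S ∧
        r = CVaR γ P (fun x => (∑ i, α i * x i) + β)}
      (β + (∑ i, α i * μ i) +
        Real.sqrt ((1 - γ) / γ) * Real.sqrt (∑ i, ∑ j, α i * S i j * α j)) := by
  rcases Nat.eq_zero_or_pos n with hn0 | hn
  · exfalso
    subst hn0
    exact hα (by ext i; exact i.elim0)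
  · constructor
    · rintro r ⟨P, hP1, hP2, hm, hcov, rfl⟩
      haveI := hP1
      exact cvar_upper hP2 hγ0 hγ1 hm hcov α β (s2_pos hS α hα)
    · intro b hb
      obtain ⟨P, h1, h2, h3, h4, h5⟩ := exists_extremal hn hγ0 hγ1 α μ hα β S hS
      exact h5.trans (hb ⟨P, h1, h2, h3, h4, rfl⟩)

end
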